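/- Let (G,S) be a pair of binary rooted trees on the same leaf-label set. Then c(G,S) = c(G,G) if and only if G and S induce the same bipartition of the leaf set at their roots (i.e., the leaf sets of the left and right root subtrees of S coincide, as an unordered pair, with those of G). -/

import Mathlib

/-- Binary rooted trees with leaves labeled by elements of `X`. -/
inductive LTree (X : Type) : Type
  | leaf : X → LTree X
  | node : LTree X → LTree X → LTree X

namespace LTree

variable {X : Type} [DecidableEq X]

/-- The list of leaf labels of a tree, read left to right. -/
def labelList : LTree X → List X
  | leaf x => [x]
  | node l r => labelList l ++ labelList r

/-- The set of leaf labels of a tree. -/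
def labels (t : LTree X) : Finset X := (labelList t).toFinset

/-- The tree is bijectively labeled: no label is repeated. -/
def DistinctLabels (t : LTree X) : Prop := (labelList t).Nodup

/-- The subtree rooted at a position (paths: `false` = left, `true` = right;
junk value below a leaf). -/
def subtreeAt : LTree X → List Bool → LTree X
  | t, [] => t
  | leaf x, _ :: _ => leaf x
  | node l _, false :: p => subtreeAt l p
  | node _ r, true :: p => subtreeAt r p

/-- `p` is a valid position (node) of the tree. -/
def isValidPos : LTree X → List Bool → Prop
  | _, [] => True
  | leaf _, _ :: _ => False
  | node l _, false :: p => isValidPos l p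
  | node _ r, true :: p => isValidPos r p

/-- The set of positions of the leaves of a tree. -/
def leafPositions : LTree X → Finset (List Bool)
  | leaf _ => {([] : List Bool)}
  | node l r =>
      (leafPositions l).image (false :: ·) ∪ (leafPositions r).image (true :: ·)

/-- A root ancestral configuration of `G`: an antichain of non-root nodes of `G`
whose descendant-leaf sets partition the leaf set; equivalently, a set of valid
non-root positions such that every leaf position has exactly one weak ancestor in
the set.  This is the set of root configurations of `G` realized on the matching
species tree `G` itself. -/
def IsConfig (G : LTree X) (A : Finset (List Bool)) : Prop :=
  (∀ p ∈ A, isValidPos G p ∧ p ≠ []) ∧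
  ∀ q ∈ leafPositions G, ∃! p, p ∈ A ∧ p <+: q

/-- The set of leaf labels descended from position `p` of `G`. -/
def labelsAt (G : LTree X) (p : List Bool) : Finset X := labels (subtreeAt G p)

/-- A root ancestral configuration of the gene tree `G` realized on the species
tree `S = node Sl Sr`: a root ancestral configuration of `G` each of whose
lineages contains no antipodal pair of leaves, i.e. each lineage has all of its
descendant leaf labels contained in a single root subtree of `S`. -/
def IsConfigOn (G Sl Sr : LTree X) (A : Finset (List Bool)) : Prop :=
  IsConfig G A ∧
  ∀ p ∈ A, labelsAt G p ⊆ labels Sl ∨ labelsAt G p ⊆ labels Sr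

end LTree

/-!
The realized configurations are a subset of the finite set of all root configurations, so the
counts agree iff every configuration is realized. Every non-root lineage of `G` lies inside one of
the two root subtrees of `G`, and those two subtrees themselves form a configuration; hence every
configuration is realized iff the labels of each root subtree of `G` lie within one root subtree
of `S`. Both root bipartitions cover the same labels and the parts of `S` are disjoint and
nonempty, so this happens iff the two bipartitions coincide.
-/

open LTree

theorem Nat.card_subtype_eq_iff_of_imp {α : Type*} {p q : α → Prop} (hq : {a | q a}.Finite)
    (hpq : ∀ a, p a → q a) :
    Nat.card {a // p a} = Nat.card {a // q a} ↔ ∀ a, q a → p a := by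
  refine ⟨fun h a ha => ?_, fun h => Nat.card_congr (Equiv.subtypeEquivRight ?_)⟩
  · have hset : {a | p a} = {a | q a} := hq.eq_of_subset_of_card_le hpq h.ge
    exact (Set.ext_iff.1 hset a).2 ha
  · exact fun a => ⟨hpq a, h a⟩

namespace Finset

variable {α : Type*} [DecidableEq α]

theorem eq_of_union_eq_of_subset_of_subset {s₁ s₂ t₁ t₂ : Finset α} (hu : s₁ ∪ s₂ = t₁ ∪ t₂)
    (ht : Disjoint t₁ t₂) (h₁ : s₁ ⊆ t₁) (h₂ : s₂ ⊆ t₂) : s₁ = t₁ := by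
  refine h₁.antisymm fun x hx => ?_
  have hx' : x ∈ s₁ ∪ s₂ := hu ▸ mem_union_left _ hx
  rcases mem_union.1 hx' with h | h
  · exact h
  · exact absurd (h₂ h) (disjoint_left.1 ht hx)

theorem eq_empty_of_union_eq_of_subset {s₁ s₂ t u : Finset α} (hu : s₁ ∪ s₂ = t ∪ u)
    (ht : Disjoint t u) (h₁ : s₁ ⊆ t) (h₂ : s₂ ⊆ t) : u = ∅ := by
  refine ht.symm.eq_bot_of_le fun x hx => ?_
  rcases mem_union.1 (hu ▸ mem_union_right _ hx : x ∈ s₁ ∪ s₂) with h | h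
  exacts [h₁ h, h₂ h]

theorem bipartition_eq_iff_subset {s₁ s₂ t₁ t₂ : Finset α} (hu : s₁ ∪ s₂ = t₁ ∪ t₂)
    (ht : Disjoint t₁ t₂) (ht₁ : t₁.Nonempty) (ht₂ : t₂.Nonempty) :
    ((s₁ ⊆ t₁ ∨ s₁ ⊆ t₂) ∧ (s₂ ⊆ t₁ ∨ s₂ ⊆ t₂)) ↔
      ((s₁ = t₁ ∧ s₂ = t₂) ∨ (s₁ = t₂ ∧ s₂ = t₁)) := by
  have hu' : s₁ ∪ s₂ = t₂ ∪ t₁ := hu.trans (union_comm _ _)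
  have hu₂ : s₂ ∪ s₁ = t₂ ∪ t₁ := (union_comm _ _).trans hu'
  constructor
  · rintro ⟨h₁ | h₁, h₂ | h₂⟩
    · exact (ht₂.ne_empty (eq_empty_of_union_eq_of_subset hu ht h₁ h₂)).elim
    · exact .inl ⟨eq_of_union_eq_of_subset_of_subset hu ht h₁ h₂,
        eq_of_union_eq_of_subset_of_subset hu₂ ht.symm h₂ h₁⟩
    · exact .inr ⟨eq_of_union_eq_of_subset_of_subset hu' ht.symm h₁ h₂,
        eq_of_union_eq_of_subset_of_subset ((union_comm _ _).trans hu) ht h₂ h₁⟩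
    · exact (ht₁.ne_empty (eq_empty_of_union_eq_of_subset hu' ht.symm h₁ h₂)).elim
  · rintro (⟨rfl, rfl⟩ | ⟨rfl, rfl⟩)
    exacts [⟨.inl le_rfl, .inr le_rfl⟩, ⟨.inr le_rfl, .inl le_rfl⟩]

end Finset

namespace LTree

section Positions

variable {X : Type}

def positions : LTree X → Finset (List Bool)
  | leaf _ => {[]}
  | node l r => insert [] ((positions l).image (false :: ·) ∪ (positions r).image (true :: ·))

theorem mem_positions_of_isValidPos {t : LTree X} {p : List Bool} (hp : isValidPos t p) :
    p ∈ positions t := by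
  induction t generalizing p with
  | leaf x => cases p <;> simp_all [isValidPos, positions]
  | node l r ihl ihr => rcases p with _ | ⟨_ | _, p⟩ <;> simp_all [isValidPos, positions]

theorem finite_setOf_isConfig (G : LTree X) : {A | IsConfig G A}.Finite :=
  (positions G).powerset.finite_toSet.subset fun _ hA =>
    Finset.mem_powerset.2 fun p hp => mem_positions_of_isValidPos (hA.1 p hp).1

theorem isConfig_node_children (l r : LTree X) : IsConfig (node l r) {[false], [true]} := by
  refine ⟨by simp [isValidPos], fun q hq => ?_⟩
  simp only [leafPositions, Finset.mem_union, Finset.mem_image] at hq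
  rcases hq with ⟨q, -, rfl⟩ | ⟨q, -, rfl⟩
  · exact ⟨[false], ⟨by simp, q, rfl⟩, by simp⟩
  · exact ⟨[true], ⟨by simp, q, rfl⟩, by simp⟩

end Positions

variable {X : Type} [DecidableEq X]

theorem labels_node (l r : LTree X) : labels (node l r) = labels l ∪ labels r := by
  simp [labels, labelList]

theorem labels_nonempty (t : LTree X) : (labels t).Nonempty := by
  induction t with
  | leaf x => exact ⟨x, by simp [labels, labelList]⟩
  | node l r ihl _ => exact (labels_node l r).symm ▸ ihl.mono Finset.subset_union_left

theorem labels_subtreeAt_subset (t : LTree X) (p : List Bool) :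
    labels (subtreeAt t p) ⊆ labels t := by
  induction t generalizing p with
  | leaf x => cases p <;> simp [subtreeAt]
  | node l r ihl ihr =>
    rcases p with _ | ⟨_ | _, p⟩
    · simp [subtreeAt]
    · exact (ihl p).trans ((labels_node l r).symm ▸ Finset.subset_union_left)
    · exact (ihr p).trans ((labels_node l r).symm ▸ Finset.subset_union_right)

theorem DistinctLabels.disjoint_labels {l r : LTree X} (h : DistinctLabels (node l r)) :
    Disjoint (labels l) (labels r) :=
  List.disjoint_toFinset_iff_disjoint.2 (List.disjoint_of_nodup_append h)

theorem forall_isConfig_imp_isConfigOn_iff (Gl Gr Sl Sr : LTree X) :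
    (∀ A, IsConfig (node Gl Gr) A → IsConfigOn (node Gl Gr) Sl Sr A) ↔
      (labels Gl ⊆ labels Sl ∨ labels Gl ⊆ labels Sr) ∧
        (labels Gr ⊆ labels Sl ∨ labels Gr ⊆ labels Sr) := by
  refine ⟨fun h => ?_, fun ⟨hl, hr⟩ A hA => ⟨hA, fun p hp => ?_⟩⟩
  · have hchildren := (h _ (isConfig_node_children Gl Gr)).2
    exact ⟨by simpa [labelsAt, subtreeAt] using hchildren [false],
      by simpa [labelsAt, subtreeAt] using hchildren [true]⟩
  · rcases p with _ | ⟨_ | _, p⟩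
    · exact absurd rfl (hA.1 [] hp).2
    · exact hl.imp (labels_subtreeAt_subset Gl p).trans (labels_subtreeAt_subset Gl p).trans
    · exact hr.imp (labels_subtreeAt_subset Gr p).trans (labels_subtreeAt_subset Gr p).trans

end LTree

theorem configOn_card_eq_iff_general (X : Type) [DecidableEq X] (Gl Gr Sl Sr : LTree X)
    (hS : DistinctLabels (LTree.node Sl Sr))
    (hlab : labels (LTree.node Gl Gr) = labels (LTree.node Sl Sr)) :
    Nat.card {A : Finset (List Bool) // IsConfigOn (LTree.node Gl Gr) Sl Sr A} =
        Nat.card {A : Finset (List Bool) // IsConfig (LTree.node Gl Gr) A} ↔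
      ((labels Gl = labels Sl ∧ labels Gr = labels Sr) ∨
       (labels Gl = labels Sr ∧ labels Gr = labels Sl)) := by
  rw [Nat.card_subtype_eq_iff_of_imp (finite_setOf_isConfig _) fun A hA => hA.1,
    forall_isConfig_imp_isConfigOn_iff]
  refine Finset.bipartition_eq_iff_subset ?_ hS.disjoint_labels (labels_nonempty Sl)
    (labels_nonempty Sr)
  simpa only [labels_node] using hlab

/-- For gene tree `G = node Gl Gr` and species tree `S = node Sl Sr` on the same
label set, `c(G,S) = c(G,G)` if and only if `G` and `S` induce the same
(unordered) bipartition of the leaf set at their roots. -/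
theorem configOn_card_eq_iff (X : Type) [DecidableEq X] (Gl Gr Sl Sr : LTree X)
    (hG : DistinctLabels (LTree.node Gl Gr))
    (hS : DistinctLabels (LTree.node Sl Sr))
    (hlab : labels (LTree.node Gl Gr) = labels (LTree.node Sl Sr)) :
    Nat.card {A : Finset (List Bool) // IsConfigOn (LTree.node Gl Gr) Sl Sr A} =
        Nat.card {A : Finset (List Bool) // IsConfig (LTree.node Gl Gr) A} ↔
      ((labels Gl = labels Sl ∧ labels Gr = labels Sr) ∨
       (labels Gl = labels Sr ∧ labels Gr = labels Sl)) :=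
  configOn_card_eq_iff_general X Gl Gr Sl Sr hS hlab
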